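/- For every convex body K ⊂ ℝⁿ, the circumradius of K satisfies R(K) ≤ (2e·Γ(n+3)/(Γ(3)Γ(n)))^{1/2} · V_n(K)^{1/n} · I₂(K̃), where K̃ := V_n(K)^{-1/n}(K − s(K)) is the volume-normalized translate of K with centroid at the origin. -/

import Mathlib

open MeasureTheory

/-- A convex body: a compact convex set with nonempty interior. -/
def IsConvexBody {n : ℕ} (K : Set (EuclideanSpace ℝ (Fin n))) : Prop :=
  IsCompact K ∧ Convex ℝ K ∧ (interior K).Nonempty

/-- The circumradius of a set: the smallest radius of a Euclidean ball containing it. -/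
noncomputable def circumradius {n : ℕ} (K : Set (EuclideanSpace ℝ (Fin n))) : ℝ :=
  sInf {r : ℝ | ∃ c : EuclideanSpace ℝ (Fin n), K ⊆ Metric.closedBall c r}

/-- The center of mass `s(K) = V_n(K)⁻¹ ∫_K x dx` of a set `K`. -/
noncomputable def centerOfMass {n : ℕ} (K : Set (EuclideanSpace ℝ (Fin n))) :
    EuclideanSpace ℝ (Fin n) :=
  ((volume K).toReal)⁻¹ • ∫ x in K, x

/-- The volume-normalized translate `K̃ = V_n(K)^{-1/n} (K - s(K))` of `K`,
with centroid at the origin. -/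
noncomputable def normalizedBody {n : ℕ} (K : Set (EuclideanSpace ℝ (Fin n))) :
    Set (EuclideanSpace ℝ (Fin n)) :=
  (fun x => (((volume K).toReal ^ ((1 : ℝ) / n))⁻¹) • (x - centerOfMass K)) '' K

/-- `I₂(L) = (∫_L ‖x‖² dx)^{1/2}`. -/
noncomputable def I2 {n : ℕ} (L : Set (EuclideanSpace ℝ (Fin n))) : ℝ :=
  Real.sqrt (∫ x in L, ‖x‖ ^ 2)

/-!
Fix `z ∈ K` and let `c` be the centroid. By convexity the homothetic copy `(1 - t) z + t K`
lies in `K`, and it has volume `tⁿ V`. Because `x - c` has mean zero on `K`, the second moment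
of this copy about `c` is at least `tⁿ (1 - t)² V ‖z - c‖²`, while it is at most the second
moment `∫_K ‖x - c‖²` of `K`. For `t = (n + 1)/(n + 2)`, `(1 + 1/(n + 1))ⁿ⁺¹ ≤ e` turns this into
`V ‖z - c‖² ≤ e n (n + 1) (n + 2) ∫_K ‖x - c‖²`, so `K` lies in the corresponding ball about `c`.
Finally `2 Γ(n + 3) / (Γ(3) Γ(n)) = n (n + 1) (n + 2)`, and rescaling `K` to `K̃` expresses
`∫_K ‖x - c‖²` through `I₂(K̃)`.
-/

open Module

theorem one_le_exp_mul_pow_mul_sq {n : ℕ} (hn : 0 < n) :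
    1 ≤ Real.exp 1 * n * (n + 1) * (n + 2) *
      (((n + 1) / (n + 2)) ^ n * (1 - (n + 1) / (n + 2)) ^ 2) := by
  have hn' : (1 : ℝ) ≤ n := by exact_mod_cast hn
  have he : ((n + 2) / (n + 1) : ℝ) ^ (n + 1) ≤ Real.exp 1 := by
    convert Real.one_add_inv_pow_le_exp (n := n + 1) using 2
    push_cast
    field_simp
    ring
  have hinv : ((n + 1) / (n + 2) : ℝ) ^ (n + 1) * ((n + 2) / (n + 1)) ^ (n + 1) = 1 := by
    rw [← mul_pow, div_mul_div_cancel₀ (by positivity), div_self (by positivity), one_pow]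
  have hsq : (1 - (n + 1) / (n + 2) : ℝ) = 1 / (n + 2) := by
    field_simp
    ring
  have hpos : (0 : ℝ) < ((n + 1) / (n + 2)) ^ (n + 1) := by positivity
  calc (1 : ℝ) ≤ Real.exp 1 * ((n + 1) / (n + 2)) ^ (n + 1) := by nlinarith
    _ ≤ Real.exp 1 * n * ((n + 1) / (n + 2)) ^ (n + 1) := by
        nlinarith [mul_pos (Real.exp_pos 1) hpos]
    _ = _ := by
        rw [hsq, pow_succ]
        field_simp

theorem Real.Gamma_add_three {x : ℝ} (hx : 0 < x) :
    Real.Gamma (x + 3) = x * (x + 1) * (x + 2) * Real.Gamma x := by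
  rw [show x + 3 = x + 2 + 1 by ring, Real.Gamma_add_one (by positivity),
    show x + 2 = x + 1 + 1 by ring, Real.Gamma_add_one (by positivity),
    Real.Gamma_add_one hx.ne']
  ring

section ChangeOfVariables

variable {E F : Type*} [NormedAddCommGroup E] [NormedSpace ℝ E] [FiniteDimensional ℝ E]
  [MeasurableSpace E] [BorelSpace E] (μ : Measure E) [μ.IsAddHaarMeasure]
  [NormedAddCommGroup F] [NormedSpace ℝ F]

theorem setIntegral_image_smul_add {s : Set E} (hs : MeasurableSet s) {b : ℝ} (hb : b ≠ 0)
    (a : E) (g : E → F) :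
    ∫ y in (fun x => b • x + a) '' s, g y ∂μ = |b| ^ finrank ℝ E • ∫ x in s, g (b • x + a) ∂μ := by
  have hf' : ∀ x ∈ s, HasFDerivWithinAt (fun x : E => b • x + a)
      (b • ContinuousLinearMap.id ℝ E) s x :=
    fun x _ => (((hasFDerivAt_id x).const_smul b).add_const a).hasFDerivWithinAt
  have hinj : Set.InjOn (fun x : E => b • x + a) s :=
    fun x _ y _ h => smul_right_injective E hb (add_right_cancel h)
  rw [integral_image_eq_integral_abs_det_fderiv_smul μ hs hf' hinj, integral_smul]
  simp [ContinuousLinearMap.det]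

end ChangeOfVariables

section InnerProductSpace

variable {E : Type*} [NormedAddCommGroup E] [InnerProductSpace ℝ E]

theorem integral_norm_add_sq_of_integral_eq_zero [CompleteSpace E] {α : Type*}
    [MeasurableSpace α] {ν : Measure α} [IsFiniteMeasure ν] {f : α → E} (hf : Integrable f ν)
    (hf2 : Integrable (fun x => ‖f x‖ ^ 2) ν) (h0 : ∫ x, f x ∂ν = 0) (w : E) :
    ∫ x, ‖w + f x‖ ^ 2 ∂ν = ν.real Set.univ * ‖w‖ ^ 2 + ∫ x, ‖f x‖ ^ 2 ∂ν := by
  have hinner : Integrable (fun x => 2 * inner ℝ w (f x)) ν := (hf.const_inner w).const_mul 2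
  have hsum : Integrable (fun x => ‖w‖ ^ 2 + 2 * inner ℝ w (f x)) ν :=
    (integrable_const _).add hinner
  simp_rw [norm_add_sq_real]
  rw [integral_add hsum hf2, integral_add (integrable_const _) hinner,
    integral_const, integral_const_mul, integral_inner hf, h0, inner_zero_right, smul_eq_mul]
  ring

variable [FiniteDimensional ℝ E] [MeasurableSpace E] [BorelSpace E] (μ : Measure E)
  [μ.IsAddHaarMeasure]

theorem Convex.pow_mul_sq_mul_measureReal_mul_sq_norm_sub_le {K : Set E} (hKc : IsCompact K)
    (hKconv : Convex ℝ K) {c : E} (hc : ∫ x in K, (x - c) ∂μ = 0) {z : E} (hz : z ∈ K) {t : ℝ}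
    (ht₀ : 0 < t) (ht₁ : t ≤ 1) :
    t ^ finrank ℝ E * (1 - t) ^ 2 * (μ.real K * ‖z - c‖ ^ 2) ≤ ∫ x in K, ‖x - c‖ ^ 2 ∂μ := by
  have hK := hKc.isClosed.measurableSet
  have : IsFiniteMeasure (μ.restrict K) := isFiniteMeasure_restrict.mpr hKc.measure_lt_top.ne
  set A := (fun x => t • x + (1 - t) • z) '' K
  have hAK : A ⊆ K := by
    rintro _ ⟨x, hx, rfl⟩
    exact hKconv hx hz ht₀.le (by linarith) (by ring)
  have hsq_int : IntegrableOn (fun x => ‖x - c‖ ^ 2) K μ :=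
    ((continuous_id.sub continuous_const).norm.pow 2).continuousOn.integrableOn_compact hKc
  have hsub_int : IntegrableOn (fun x => t • (x - c)) K μ :=
    ((continuous_id.sub continuous_const).const_smul t).continuousOn.integrableOn_compact hKc
  have hA : ∫ y in A, ‖y - c‖ ^ 2 ∂μ =
      t ^ finrank ℝ E * ∫ x in K, ‖(1 - t) • (z - c) + t • (x - c)‖ ^ 2 ∂μ := by
    rw [setIntegral_image_smul_add μ hK ht₀.ne', abs_of_pos ht₀, smul_eq_mul]
    congr 1
    refine setIntegral_congr_fun hK fun x _ => ?_
    congr 2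
    module
  have hmean : ∫ x in K, ‖(1 - t) • (z - c) + t • (x - c)‖ ^ 2 ∂μ =
      μ.real K * ‖(1 - t) • (z - c)‖ ^ 2 + ∫ x in K, ‖t • (x - c)‖ ^ 2 ∂μ := by
    rw [integral_norm_add_sq_of_integral_eq_zero hsub_int ?_ (by rw [integral_smul, hc, smul_zero]),
      measureReal_restrict_apply_univ]
    simpa only [norm_smul, mul_pow] using hsq_int.const_mul (‖t‖ ^ 2)
  calc t ^ finrank ℝ E * (1 - t) ^ 2 * (μ.real K * ‖z - c‖ ^ 2)
      = t ^ finrank ℝ E * (μ.real K * ‖(1 - t) • (z - c)‖ ^ 2) := by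
        rw [norm_smul, Real.norm_of_nonneg (by linarith)]
        ring
    _ ≤ t ^ finrank ℝ E * ∫ x in K, ‖(1 - t) • (z - c) + t • (x - c)‖ ^ 2 ∂μ := by
        rw [hmean]
        gcongr
        exact le_add_of_nonneg_right (integral_nonneg fun x => by positivity)
    _ = ∫ y in A, ‖y - c‖ ^ 2 ∂μ := hA.symm
    _ ≤ ∫ x in K, ‖x - c‖ ^ 2 ∂μ :=
        setIntegral_mono_set hsq_int (.of_forall fun x => by positivity) (.of_forall hAK)

theorem Convex.measureReal_mul_sq_norm_sub_le {K : Set E} (hKc : IsCompact K)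
    (hKconv : Convex ℝ K) (hE : 0 < finrank ℝ E) {c : E} (hc : ∫ x in K, (x - c) ∂μ = 0) {z : E}
    (hz : z ∈ K) :
    μ.real K * ‖z - c‖ ^ 2 ≤
      Real.exp 1 * finrank ℝ E * (finrank ℝ E + 1) * (finrank ℝ E + 2) *
        ∫ x in K, ‖x - c‖ ^ 2 ∂μ := by
  set d := finrank ℝ E
  set t : ℝ := (d + 1) / (d + 2)
  have ht₁ : t ≤ 1 := (div_le_one (by positivity)).mpr (by linarith)
  have hmoment := hKconv.pow_mul_sq_mul_measureReal_mul_sq_norm_sub_le μ hKc hc hz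
    (by positivity) ht₁
  calc μ.real K * ‖z - c‖ ^ 2
      ≤ Real.exp 1 * d * (d + 1) * (d + 2) * (t ^ d * (1 - t) ^ 2) * (μ.real K * ‖z - c‖ ^ 2) :=
        le_mul_of_one_le_left (by positivity) (one_le_exp_mul_pow_mul_sq hE)
    _ ≤ Real.exp 1 * d * (d + 1) * (d + 2) * ∫ x in K, ‖x - c‖ ^ 2 ∂μ := by
        rw [mul_assoc]
        gcongr

end InnerProductSpace

section EuclideanSpace

variable {n : ℕ} {K : Set (EuclideanSpace ℝ (Fin n))}

theorem circumradius_le_of_subset_closedBall (hK : K.Nonempty) {c : EuclideanSpace ℝ (Fin n)}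
    {r : ℝ} (h : K ⊆ Metric.closedBall c r) : circumradius K ≤ r := by
  obtain ⟨x, hx⟩ := hK
  exact csInf_le ⟨0, fun _ ⟨_, hs⟩ => dist_nonneg.trans (hs hx)⟩ ⟨c, h⟩

theorem setIntegral_sub_centerOfMass (hK : IntegrableOn (fun x => x) K)
    (hV : (volume K).toReal ≠ 0) : ∫ x in K, (x - centerOfMass K) = 0 := by
  have hfin : volume K ≠ ⊤ := fun h => hV (by simp [h])
  rw [integral_sub hK (integrableOn_const hfin), setIntegral_const, centerOfMass, smul_smul,
    measureReal_def, mul_inv_cancel₀ hV, one_smul, sub_self]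

theorem integral_sq_norm_normalizedBody (hK : MeasurableSet K) (hV : 0 < (volume K).toReal) :
    ∫ y in normalizedBody K, ‖y‖ ^ 2 =
      ((volume K).toReal ^ ((1 : ℝ) / n))⁻¹ ^ (n + 2) * ∫ x in K, ‖x - centerOfMass K‖ ^ 2 := by
  set r := (volume K).toReal ^ ((1 : ℝ) / n)
  have hr : 0 < r⁻¹ := inv_pos.mpr (Real.rpow_pos_of_pos hV _)
  have himage : normalizedBody K = (fun x => r⁻¹ • x + -(r⁻¹ • centerOfMass K)) '' K := by
    simp only [normalizedBody, r, smul_add, smul_neg, sub_eq_add_neg]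
  rw [himage, setIntegral_image_smul_add volume hK hr.ne', finrank_euclideanSpace_fin,
    abs_of_pos hr, smul_eq_mul, pow_add, mul_assoc]
  congr 1
  rw [← integral_const_mul]
  refine setIntegral_congr_fun hK fun x _ => ?_
  rw [← smul_neg, ← smul_add, norm_smul, Real.norm_of_nonneg hr.le, mul_pow, sub_eq_add_neg]


theorem IsConvexBody.toReal_volume_pos (hK : IsConvexBody K) : 0 < (volume K).toReal :=
  ENNReal.toReal_pos (Measure.measure_pos_of_nonempty_interior _ hK.2.2).ne'
    hK.1.measure_lt_top.ne

theorem IsConvexBody.circumradius_le (hn : 0 < n) (hK : IsConvexBody K) :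
    circumradius K ≤ Real.sqrt (Real.exp 1 * n * (n + 1) * (n + 2) *
      (∫ x in K, ‖x - centerOfMass K‖ ^ 2) / (volume K).toReal) := by
  have hV := hK.toReal_volume_pos
  have hc := setIntegral_sub_centerOfMass
    (continuous_id.continuousOn.integrableOn_compact hK.1) hV.ne'
  refine circumradius_le_of_subset_closedBall (hK.2.2.mono interior_subset)
    (c := centerOfMass K) fun z hz => ?_
  rw [Metric.mem_closedBall, dist_eq_norm, Real.le_sqrt (norm_nonneg _) (by positivity),
    le_div_iff₀ hV, mul_comm]
  have hbound := hK.2.1.measureReal_mul_sq_norm_sub_le volume hK.1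
    (by rwa [finrank_euclideanSpace_fin]) hc hz
  rwa [finrank_euclideanSpace_fin] at hbound

end EuclideanSpace

/-- For every convex body `K ⊆ ℝⁿ`,
`R(K) ≤ (2e Γ(n+3)/(Γ(3)Γ(n)))^{1/2} V_n(K)^{1/n} I₂(K̃)`. -/
theorem circumradius_bound {n : ℕ} (hn : 0 < n)
    (K : Set (EuclideanSpace ℝ (Fin n))) (hK : IsConvexBody K) :
    circumradius K ≤
      Real.sqrt (2 * Real.exp 1 * Real.Gamma (n + 3) / (Real.Gamma 3 * Real.Gamma n)) *
        (volume K).toReal ^ ((1 : ℝ) / n) * I2 (normalizedBody K) := by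
  have hV := hK.toReal_volume_pos
  set V := (volume K).toReal
  set r := V ^ ((1 : ℝ) / n)
  set S := ∫ x in K, ‖x - centerOfMass K‖ ^ 2
  set C := Real.exp 1 * n * (n + 1) * (n + 2)
  have hr : 0 < r := Real.rpow_pos_of_pos hV _
  have hrn : r ^ n = V := by
    rw [← Real.rpow_natCast, ← Real.rpow_mul hV.le, one_div_mul_cancel (by positivity),
      Real.rpow_one]
  have hI : ∫ y in normalizedBody K, ‖y‖ ^ 2 = r⁻¹ ^ (n + 2) * S :=
    integral_sq_norm_normalizedBody hK.1.isClosed.measurableSet hV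
  have hGamma : 2 * Real.exp 1 * Real.Gamma (n + 3) / (Real.Gamma 3 * Real.Gamma n) = C := by
    rw [Real.Gamma_add_three (by positivity), Real.Gamma_ofNat_eq_factorial]
    field_simp [(Real.Gamma_pos_of_pos (by positivity : (0 : ℝ) < n)).ne']
    norm_num
    ring
  have hCS : C * S / V = (Real.sqrt C * r) ^ 2 * (r⁻¹ ^ (n + 2) * S) := by
    rw [mul_pow, Real.sq_sqrt (by positivity), ← hrn, inv_pow, pow_add]
    field_simp
  rw [hGamma, I2, hI, ← Real.sqrt_sq (by positivity : 0 ≤ Real.sqrt C * r),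
    ← Real.sqrt_mul (sq_nonneg _), ← hCS]
  exact hK.circumradius_le hn
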